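/- (Schoenberg.) Let d ≥ 1 and α > 0. The stable function K : ℝ^d → ℝ defined by K(x) = exp(−‖x‖^α), where ‖·‖ is the Euclidean norm on ℝ^d, is positive definite if and only if α ≤ 2. -/

import Mathlib

/-- A function `f : E → ℝ` on an additive group `E` is positive definite if for every `n`,
all points `x₁, …, xₙ ∈ E` and all real weights `λ₁, …, λₙ`, one has
`∑ᵢ ∑ⱼ λᵢ λⱼ f (xᵢ - xⱼ) ≥ 0`. -/
def IsPosDefFun {E : Type*} [AddCommGroup E] (f : E → ℝ) : Prop :=
  ∀ (n : ℕ) (x : Fin n → E) (lam : Fin n → ℝ),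
    0 ≤ ∑ i, ∑ j, lam i * lam j * f (x i - x j)

/-!
For `α ≤ 2` everything is built from Gaussians. Writing
`exp (-t‖x - y‖²) = exp (-t‖x‖²) exp (-t‖y‖²) exp (2t⟪x, y⟫)` and expanding the last factor as
the exponential series of the Gram matrix, the Schur product theorem makes the Gaussian kernel
positive semidefinite. For `β = α / 2 < 1` the Lévy–Khintchine formula
`u ^ β = C⁻¹ ∫₀^∞ (1 - e^{-su}) s^{-1-β} ds` exhibits `exp (-D ^ β)`, `D = ‖x - y‖²`, as a limit of
`e^{-M} exp (∫ₐ^∞ w(s) e^{-sD} ds)`: entrywise exponentials of nonnegative mixtures of Gaussians.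

For `α > 2` the points `0, v, 2v` with weights `1, -2, 1` give
`1 - exp (-2^α s) ≤ 4 (1 - exp (-s))` for all `s > 0`, which fails for small `s` since `2^α > 4`.
-/

open Real Matrix Filter Topology MeasureTheory Set

variable {ι : Type*} [Fintype ι]

namespace Matrix

theorem isClosed_setOf_posSemidef : IsClosed {A : Matrix ι ι ℝ | A.PosSemidef} := by
  simp only [posSemidef_iff_dotProduct_mulVec, ofPred_and, ofPred_forall]
  refine .inter (isClosed_eq (by fun_prop) continuous_id) <|
    isClosed_iInter fun x => isClosed_le continuous_const (by fun_prop)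

theorem PosSemidef.of_tendsto {α : Type*} {l : Filter α} [l.NeBot] {A : α → Matrix ι ι ℝ}
    {B : Matrix ι ι ℝ} (hAB : Tendsto A l (𝓝 B)) (hA : ∀ᶠ a in l, (A a).PosSemidef) :
    B.PosSemidef :=
  isClosed_setOf_posSemidef.mem_of_tendsto hAB hA

theorem posSemidef_vecMulVec_self (a : ι → ℝ) : (vecMulVec a a).PosSemidef := by
  simpa using posSemidef_vecMulVec_self_star a

theorem PosSemidef.map_pow {A : Matrix ι ι ℝ} (hA : A.PosSemidef) (k : ℕ) :
    (A.map (· ^ k)).PosSemidef := by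
  induction k with
  | zero =>
    have : A.map (· ^ 0) = vecMulVec 1 1 := by ext; simp [vecMulVec]
    exact this ▸ posSemidef_vecMulVec_self 1
  | succ k ih =>
    have : A.map (· ^ (k + 1)) = A.map (· ^ k) ⊙ A := by ext; simp [pow_succ]
    exact this ▸ ih.hadamard hA

theorem PosSemidef.map_exp {A : Matrix ι ι ℝ} (hA : A.PosSemidef) :
    (A.map Real.exp).PosSemidef := by
  refine PosSemidef.of_tendsto (l := atTop)
    (A := fun N => ∑ k ∈ Finset.range N, (k.factorial : ℝ)⁻¹ • A.map (· ^ k)) ?_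
    (.of_forall fun N => posSemidef_sum _ fun k _ => (hA.map_pow k).smul (by positivity))
  refine tendsto_pi_nhds.2 fun i => tendsto_pi_nhds.2 fun j => ?_
  simpa [Matrix.sum_apply, exp_eq_exp_ℝ, div_eq_inv_mul] using
    (NormedSpace.expSeries_div_hasSum_exp (A i j)).tendsto_sum_nat

theorem posSemidef_integral {S : Type*} [MeasurableSpace S] {μ : Measure S}
    {K : S → Matrix ι ι ℝ} (hK : ∀ᵐ s ∂μ, (K s).PosSemidef)
    (hint : ∀ i j, Integrable (fun s => K s i j) μ) :
    (of fun i j => ∫ s, K s i j ∂μ).PosSemidef := by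
  refine posSemidef_iff_dotProduct_mulVec.2 ⟨?_, fun x => ?_⟩
  · ext i j
    refine integral_congr_ae ?_
    filter_upwards [hK] with s hs
    simpa using congrFun₂ hs.isHermitian i j
  · have hquad : star x ⬝ᵥ (of fun i j => ∫ s, K s i j ∂μ) *ᵥ x
        = ∫ s, star x ⬝ᵥ K s *ᵥ x ∂μ := by
      simp only [dotProduct, mulVec, of_apply]
      rw [integral_finsetSum _ fun i _ => ?_]
      · refine Finset.sum_congr rfl fun i _ => ?_
        rw [integral_const_mul, integral_finsetSum _ fun j _ => (hint i j).mul_const _]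
        simp_rw [integral_mul_const]
      · exact (integrable_finsetSum _ fun j _ => (hint i j).mul_const _).const_mul _
    rw [hquad]
    exact integral_nonneg_of_ae (hK.mono fun s hs => hs.dotProduct_mulVec_nonneg x)

end Matrix

theorem posSemidef_exp_neg_mul_norm_sub_sq {E : Type*} [NormedAddCommGroup E]
    [InnerProductSpace ℝ E] (x : ι → E) {t : ℝ} (ht : 0 ≤ t) :
    (of fun i j => exp (-(t * ‖x i - x j‖ ^ 2))).PosSemidef := by
  set g : ι → ℝ := fun i => exp (-(t * ‖x i‖ ^ 2))
  have hsplit : (of fun i j => exp (-(t * ‖x i - x j‖ ^ 2)))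
      = vecMulVec g g ⊙ ((2 * t) • gram ℝ x).map exp := by
    ext i j
    simp only [of_apply, hadamard_apply, vecMulVec_apply, map_apply, Matrix.smul_apply, gram_apply,
      smul_eq_mul, g, ← exp_add, norm_sub_sq_real]
    ring_nf
  rw [hsplit]
  exact (posSemidef_vecMulVec_self g).hadamard
    ((posSemidef_gram ℝ x).smul (by positivity)).map_exp

section FracPow

variable {β : ℝ}

theorem integrableOn_one_sub_exp_neg_mul_rpow (hβ0 : 0 < β) (hβ1 : β < 1) {u : ℝ} (hu : 0 ≤ u) :
    IntegrableOn (fun s => (1 - exp (-(s * u))) * s ^ (-1 - β)) (Ioi 0) := by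
  have hmeas : AEStronglyMeasurable (fun s : ℝ => (1 - exp (-(s * u))) * s ^ (-1 - β)) :=
    (by fun_prop : Measurable _).aestronglyMeasurable
  have hnn : ∀ s : ℝ, 0 < s → 0 ≤ (1 - exp (-(s * u))) * s ^ (-1 - β) := fun s hs =>
    mul_nonneg (by simp only [sub_nonneg, exp_le_one_iff, neg_nonpos]; positivity)
      (rpow_nonneg hs.le _)
  rw [← Ioc_union_Ioi_eq_Ioi zero_le_one]
  refine IntegrableOn.union ?_ ?_
  · have hrpow := intervalIntegral.intervalIntegrable_rpow' (a := 0) (b := 1) (r := -β)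
      (by linarith)
    refine Integrable.mono' (hrpow.1.const_mul u) hmeas.restrict ?_
    filter_upwards [ae_restrict_mem measurableSet_Ioc] with s hs
    have hs0 : 0 < s := hs.1
    rw [norm_of_nonneg (hnn s hs0)]
    calc (1 - exp (-(s * u))) * s ^ (-1 - β) ≤ (s * u) * s ^ (-1 - β) := by
          gcongr; linarith [add_one_le_exp (-(s * u))]
      _ = u * s ^ (-β) := by
          rw [mul_comm s, mul_assoc, ← rpow_one_add' hs0.le (by linarith)]; ring_nf
  · refine Integrable.mono' (integrableOn_Ioi_rpow_of_lt (a := -1 - β) (by linarith) zero_lt_one)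
      hmeas.restrict ?_
    filter_upwards [ae_restrict_mem measurableSet_Ioi] with s (hs : 1 < s)
    rw [norm_of_nonneg (hnn s (by linarith))]
    exact mul_le_of_le_one_left (rpow_nonneg (by linarith) _)
      (by linarith [exp_pos (-(s * u))])

variable (β) in
/-- Equal to `Γ(1 - β) / β` for `0 < β < 1`. -/
noncomputable def fracPowConst : ℝ := ∫ s in Ioi (0 : ℝ), (1 - exp (-s)) * s ^ (-1 - β)

theorem integral_one_sub_exp_neg_mul_rpow (hβ0 : 0 < β) {u : ℝ} (hu : 0 ≤ u) :
    ∫ s in Ioi (0 : ℝ), (1 - exp (-(s * u))) * s ^ (-1 - β) = u ^ β * fracPowConst β := by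
  rcases hu.eq_or_lt with rfl | hu
  · simp [zero_rpow hβ0.ne']
  have hsub := integral_comp_mul_left_Ioi (fun s => (1 - exp (-s)) * s ^ (-1 - β)) 0 hu
  rw [mul_zero, ← fracPowConst, smul_eq_mul] at hsub
  calc ∫ s in Ioi (0 : ℝ), (1 - exp (-(s * u))) * s ^ (-1 - β)
      = u ^ (1 + β) * ∫ s in Ioi (0 : ℝ), (1 - exp (-(u * s))) * (u * s) ^ (-1 - β) := by
        rw [← integral_const_mul]
        refine setIntegral_congr_fun measurableSet_Ioi fun s (hs : 0 < s) => ?_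
        rw [mul_rpow hu.le hs.le, mul_comm u s]
        have hcancel : u ^ (1 + β) * u ^ (-1 - β) = 1 := by
          rw [← rpow_add hu]; ring_nf; exact rpow_zero u
        linear_combination (1 - exp (-(s * u))) * s ^ (-1 - β) * hcancel.symm
    _ = u ^ β * fracPowConst β := by
        rw [hsub, ← mul_assoc, rpow_add hu, rpow_one]
        field_simp

theorem fracPowConst_pos (hβ0 : 0 < β) (hβ1 : β < 1) : 0 < fracPowConst β := by
  have hint := integrableOn_one_sub_exp_neg_mul_rpow hβ0 hβ1 zero_le_one
  simp only [mul_one] at hint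
  have hpos : ∀ s : ℝ, 0 < s → 0 < (1 - exp (-s)) * s ^ (-1 - β) := fun s hs =>
    mul_pos (by simpa using hs) (rpow_pos_of_pos hs _)
  rw [fracPowConst, setIntegral_pos_iff_support_of_nonneg_ae _ hint]
  · have hsupp : Ioi 0 ⊆ Function.support fun s : ℝ => (1 - exp (-s)) * s ^ (-1 - β) :=
      fun s hs => (hpos s hs).ne'
    rw [inter_eq_right.2 hsupp, Real.volume_Ioi]
    exact ENNReal.zero_lt_top
  · filter_upwards [ae_restrict_mem measurableSet_Ioi] with s hs using (hpos s hs).le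

end FracPow

theorem tendsto_setIntegral_Ioi_one_div_add_one {f : ℝ → ℝ} (hf : IntegrableOn f (Ioi 0)) :
    Tendsto (fun m : ℕ => ∫ s in Ioi (1 / (m + 1 : ℝ)), f s) atTop (𝓝 (∫ s in Ioi 0, f s)) := by
  have hU : (⋃ m : ℕ, Ioi (1 / (m + 1 : ℝ))) = Ioi 0 := by
    ext s
    simp only [mem_iUnion, mem_Ioi]
    exact ⟨fun ⟨m, hm⟩ => lt_trans Nat.one_div_pos_of_nat hm, fun hs => exists_nat_one_div_lt hs⟩
  have hmono : Monotone fun m : ℕ => Ioi (1 / (m + 1 : ℝ)) := fun m k hmk =>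
    Ioi_subset_Ioi (Nat.one_div_le_one_div hmk)
  simpa only [hU] using tendsto_setIntegral_of_monotone (fun _ => measurableSet_Ioi) hmono
    (hU ▸ hf)

theorem posSemidef_map_exp_neg_integral {D : Matrix ι ι ℝ} (hD : ∀ i j, 0 ≤ D i j)
    (hexp : ∀ t, 0 ≤ t → (D.map fun d => exp (-(t * d))).PosSemidef)
    {μ : Measure ℝ} (hμ : ∀ᵐ s ∂μ, 0 ≤ s) {w : ℝ → ℝ} (hw : ∀ᵐ s ∂μ, 0 ≤ w s)
    (hwi : Integrable w μ) :
    (D.map fun d => exp (-∫ s, w s * (1 - exp (-(s * d))) ∂μ)).PosSemidef := by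
  have hint : ∀ d, 0 ≤ d → Integrable (fun s => w s * exp (-(s * d))) μ := fun d hd =>
    hwi.mul_bdd (c := 1) (by fun_prop) <| hμ.mono fun s hs => by
      rw [norm_of_nonneg (exp_nonneg _), exp_le_one_iff, neg_nonpos]; positivity
  have hH : (of fun i j => ∫ s, w s * exp (-(s * D i j)) ∂μ).PosSemidef :=
    posSemidef_integral (K := fun s => w s • D.map fun d => exp (-(s * d)))
      (by filter_upwards [hμ, hw] with s hs hws using (hexp s hs).smul hws)
      fun i j => hint _ (hD i j)
  have hsplit : (D.map fun d => exp (-∫ s, w s * (1 - exp (-(s * d))) ∂μ))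
      = exp (-∫ s, w s ∂μ) • (of fun i j => ∫ s, w s * exp (-(s * D i j)) ∂μ).map exp := by
    ext i j
    have hdiff : ∫ s, w s * (1 - exp (-(s * D i j))) ∂μ
        = ∫ s, w s ∂μ - ∫ s, w s * exp (-(s * D i j)) ∂μ := by
      simp only [mul_sub, mul_one, integral_sub hwi (hint _ (hD i j))]
    simp only [map_apply, Matrix.smul_apply, of_apply, smul_eq_mul, hdiff, ← exp_add]
    congr 1
    ring
  rw [hsplit]
  exact hH.map_exp.smul (exp_pos _).le

theorem posSemidef_map_exp_neg_rpow {D : Matrix ι ι ℝ} (hD : ∀ i j, 0 ≤ D i j)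
    (hexp : ∀ t, 0 ≤ t → (D.map fun d => exp (-(t * d))).PosSemidef)
    {β : ℝ} (hβ0 : 0 < β) (hβ1 : β < 1) :
    (D.map fun d => exp (-d ^ β)).PosSemidef := by
  set w : ℝ → ℝ := fun s => (fracPowConst β)⁻¹ * s ^ (-1 - β)
  have hC := fracPowConst_pos hβ0 hβ1
  have hlim : ∀ d, 0 ≤ d → Tendsto (fun m : ℕ => ∫ s in Ioi (1 / (m + 1 : ℝ)),
      w s * (1 - exp (-(s * d)))) atTop (𝓝 (d ^ β)) := fun d hd => by
    have := (tendsto_setIntegral_Ioi_one_div_add_one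
      (integrableOn_one_sub_exp_neg_mul_rpow hβ0 hβ1 hd)).const_mul (fracPowConst β)⁻¹
    simpa only [← integral_const_mul, integral_one_sub_exp_neg_mul_rpow hβ0 hd, w,
      mul_comm (d ^ β), inv_mul_cancel_left₀ hC.ne', mul_assoc, mul_comm (_ ^ (-1 - β))] using this
  refine PosSemidef.of_tendsto (l := atTop) (tendsto_pi_nhds.2 fun i => tendsto_pi_nhds.2 fun j =>
    ((continuous_exp.tendsto _).comp (hlim _ (hD i j)).neg)) (.of_forall fun m => ?_)
  refine posSemidef_map_exp_neg_integral hD hexp ?_ ?_ ?_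
  · filter_upwards [ae_restrict_mem measurableSet_Ioi] with s (hs : _ < s)
    exact (Nat.one_div_pos_of_nat.trans hs).le
  · filter_upwards [ae_restrict_mem measurableSet_Ioi] with s (hs : _ < s)
    have := Nat.one_div_pos_of_nat.trans hs
    positivity
  · exact (integrableOn_Ioi_rpow_of_lt (by linarith) Nat.one_div_pos_of_nat).const_mul _

theorem posSemidef_exp_neg_norm_sub_rpow {E : Type*} [NormedAddCommGroup E]
    [InnerProductSpace ℝ E] (x : ι → E) {α : ℝ} (hα : 0 < α) (hα2 : α ≤ 2) :
    (of fun i j => exp (-‖x i - x j‖ ^ α)).PosSemidef := by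
  have hgauss : ∀ t, 0 ≤ t →
      ((of fun i j => ‖x i - x j‖ ^ 2).map fun d => exp (-(t * d))).PosSemidef :=
    fun t ht => posSemidef_exp_neg_mul_norm_sub_sq x ht
  rcases hα2.lt_or_eq with hα2 | rfl
  · have heq : (of fun i j => exp (-‖x i - x j‖ ^ α))
        = (of fun i j => ‖x i - x j‖ ^ 2).map fun d => exp (-d ^ (α / 2)) := by
      ext i j
      rw [map_apply, of_apply, of_apply, ← rpow_natCast, ← rpow_mul (norm_nonneg _)]
      ring_nf
    rw [heq]
    exact posSemidef_map_exp_neg_rpow (fun i j => sq_nonneg _) hgauss (by positivity)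
      (by linarith)
  · have heq : (of fun i j => exp (-‖x i - x j‖ ^ (2 : ℝ)))
        = (of fun i j => ‖x i - x j‖ ^ 2).map fun d => exp (-(1 * d)) := by
      ext i j
      simp
    exact heq ▸ hgauss 1 zero_le_one

theorem IsPosDefFun.of_posSemidef {E : Type*} [AddCommGroup E] {f : E → ℝ}
    (hf : ∀ n (x : Fin n → E), (of fun i j => f (x i - x j)).PosSemidef) : IsPosDefFun f :=
  fun n x lam => by
    simpa [dotProduct, mulVec, Finset.mul_sum, mul_assoc, mul_comm, mul_left_comm] using
      (hf n x).dotProduct_mulVec_nonneg lam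

theorem IsPosDefFun.four_mul_le {E : Type*} [NormedAddCommGroup E] [NormedSpace ℝ E]
    {g : ℝ → ℝ} (hg : IsPosDefFun fun x : E => g ‖x‖) (v : E) :
    4 * g ‖v‖ ≤ 3 * g 0 + g (2 * ‖v‖) := by
  have h := hg 3 ![0, v, (2 : ℝ) • v] ![1, -2, 1]
  have h2 : ‖v - (2 : ℝ) • v‖ = ‖v‖ := by rw [two_smul, sub_add_cancel_left, norm_neg]
  have h3 : ‖(2 : ℝ) • v - v‖ = ‖v‖ := by rw [two_smul, add_sub_cancel_right]
  simp only [Fin.sum_univ_three, Fin.isValue, cons_val_zero, mul_one, sub_zero, cons_val_one,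
    mul_neg, neg_mul, cons_val, norm_zero, one_mul, zero_sub, norm_neg, norm_smul, norm_ofNat,
    sub_self, neg_neg, h2, h3] at h
  linarith

theorem exists_four_mul_one_sub_exp_neg_lt {c : ℝ} (hc : 4 < c) :
    ∃ s > 0, 4 * (1 - exp (-s)) < 1 - exp (-(c * s)) := by
  have hc0 : 0 < c := by linarith
  refine ⟨(c - 4) / (8 * c), by positivity, ?_⟩
  have hcs : c * ((c - 4) / (8 * c)) = (c - 4) / 8 := by field_simp
  have hexp : exp (-((c - 4) / 8)) ≤ (1 + (c - 4) / 8)⁻¹ := by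
    rw [Real.exp_neg]
    exact inv_anti₀ (by linarith) (by linarith [add_one_le_exp ((c - 4) / 8)])
  rw [hcs]
  calc 4 * (1 - exp (-((c - 4) / (8 * c)))) ≤ 4 * ((c - 4) / (8 * c)) := by
        linarith [add_one_le_exp (-((c - 4) / (8 * c)))]
    _ < 1 - (1 + (c - 4) / 8)⁻¹ := by
      rw [show 1 + (c - 4) / 8 = (c + 4) / 8 by ring, inv_div, one_sub_div (by linarith),
        ← mul_div_assoc, div_lt_div_iff₀ (by positivity) (by linarith)]
      nlinarith
    _ ≤ 1 - exp (-((c - 4) / 8)) := by linarith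

theorem le_two_of_isPosDefFun_exp_neg_norm_rpow {E : Type*} [NormedAddCommGroup E]
    [NormedSpace ℝ E] [Nontrivial E] {α : ℝ}
    (h : IsPosDefFun fun x : E => exp (-‖x‖ ^ α)) : α ≤ 2 := by
  by_contra! hα
  have hc : 4 < (2 : ℝ) ^ α :=
    calc (4 : ℝ) = 2 ^ (2 : ℝ) := by norm_num
      _ < 2 ^ α := rpow_lt_rpow_of_exponent_lt one_lt_two hα
  obtain ⟨s, hs, hlt⟩ := exists_four_mul_one_sub_exp_neg_lt hc
  obtain ⟨v, hv⟩ := exists_norm_eq E (rpow_nonneg hs.le α⁻¹)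
  have := h.four_mul_le (g := fun r => exp (-r ^ α)) v
  simp only [hv, zero_rpow (by positivity : α ≠ 0), mul_rpow zero_le_two (rpow_nonneg hs.le _),
    ← rpow_mul hs.le, inv_mul_cancel₀ (by positivity : α ≠ 0), rpow_one, neg_zero, exp_zero,
    mul_one] at this
  linarith

/-- (Schoenberg.) For `d ≥ 1` and `α > 0`, the stable function `K(x) = exp(−‖x‖^α)`
on `ℝ^d` with the Euclidean norm is positive definite if and only if `α ≤ 2`. -/
theorem stable_posDef_iff (d : ℕ) (hd : 1 ≤ d) (α : ℝ) (hα : 0 < α) :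
    IsPosDefFun (fun x : EuclideanSpace ℝ (Fin d) => Real.exp (-‖x‖ ^ α)) ↔ α ≤ 2 := by
  have : Nonempty (Fin d) := ⟨⟨0, hd⟩⟩
  exact ⟨le_two_of_isPosDefFun_exp_neg_norm_rpow,
    fun hα2 => .of_posSemidef fun _ x => posSemidef_exp_neg_norm_sub_rpow x hα hα2⟩
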